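/- Let (R,m) be a Noetherian local ring, I an ideal, and a ∈ I \ mI an element such that a° is a nonzerodivisor in G(I). Then for all n ≥ 0, aR ∩ I^n = aI^{n-1} (with the convention I^{-1} = R), and consequently mI^n + aI^{n-1} = mI^n + (aR ∩ I^n). -/

import Mathlib

/-!
If the initial form `a°` of `a ∈ Iᵐ` is a nonzerodivisor of `G(I)`, then for `r ∈ Iᵏ` with
`a * r ∈ Iᵐ⁺ᵏ⁺¹` we get `a° * r° = 0` in degree `m + k`, hence `r° = 0`, i.e. `r ∈ Iᵏ⁺¹`.
Climbing one degree at a time, `a * r ∈ Iⁿ` forces `r ∈ Iⁿ⁻ᵐ`, which is the nontrivial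
inclusion `aR ∩ Iⁿ ⊆ aIⁿ⁻ᵐ`.
-/

open IsLocalRing

/-- The associated graded ring `G(I) = ⊕ Iⁿ/Iⁿ⁺¹`, realized as `R[It]/I·R[It]`. -/
noncomputable def assocGraded {R : Type*} [CommRing R] (I : Ideal R) :=
  (reesAlgebra I) ⧸ (Ideal.map (algebraMap R (reesAlgebra I)) I)

noncomputable instance {R : Type*} [CommRing R] (I : Ideal R) : CommRing (assocGraded I) :=
  Ideal.Quotient.commRing _

/-- The class of `b ∈ Iⁿ` in the degree-`n` piece of `G(I)`. -/
noncomputable def gradedClass {R : Type*} [CommRing R] (I : Ideal R) (n : ℕ) (b : R)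
    (hb : b ∈ I ^ n) : assocGraded I :=
  Ideal.Quotient.mk _ ⟨Polynomial.monomial n b, reesAlgebra.monomial_mem.mpr hb⟩

section GradedClass

variable {R : Type*} [CommRing R] (I : Ideal R)

open Polynomial

lemma coeff_mem_pow_succ_of_mem_map_algebraMap {p : reesAlgebra I}
    (hp : p ∈ I.map (algebraMap R (reesAlgebra I))) (n : ℕ) :
    (p : R[X]).coeff n ∈ I ^ (n + 1) := by
  induction hp using Submodule.span_induction generalizing n with
  | mem x hx =>
    obtain ⟨c, hc, rfl⟩ := hx
    rcases n with _ | n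
    · simpa using hc
    · simp
  | zero => simp
  | add x y _ _ hx hy => simpa using add_mem (hx n) (hy n)
  | smul q x _ hx =>
    rw [smul_eq_mul, Subalgebra.coe_mul, coeff_mul]
    refine sum_mem fun ij hij => ?_
    have hq : (q : R[X]).coeff ij.1 ∈ I ^ ij.1 := (mem_reesAlgebra_iff I _).mp q.2 ij.1
    rw [Finset.HasAntidiagonal.mem_antidiagonal] at hij
    rw [← hij, add_assoc, pow_add]
    exact Ideal.mul_mem_mul hq (hx ij.2)

lemma gradedClass_add {k : ℕ} {x y : R} (hx : x ∈ I ^ k) (hy : y ∈ I ^ k)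
    (hxy : x + y ∈ I ^ k) :
    gradedClass I k (x + y) hxy = gradedClass I k x hx + gradedClass I k y hy :=
  (congrArg (Ideal.Quotient.mk _) (Subtype.ext (map_add (monomial k) x y))).trans
    (map_add _ _ _)

lemma gradedClass_mul {m k : ℕ} {a r : R} (ha : a ∈ I ^ m) (hr : r ∈ I ^ k)
    (har : a * r ∈ I ^ (m + k)) :
    gradedClass I m a ha * gradedClass I k r hr = gradedClass I (m + k) (a * r) har :=
  (map_mul _ _ _).symm.trans
    (congrArg (Ideal.Quotient.mk _) (Subtype.ext (monomial_mul_monomial m k a r)))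

lemma gradedClass_zero_eq_zero_of_mem {y : R} (hy : y ∈ I) (hy₀ : y ∈ I ^ 0) :
    gradedClass I 0 y hy₀ = 0 := by
  have hC : (⟨monomial 0 y, reesAlgebra.monomial_mem.mpr hy₀⟩ : reesAlgebra I) =
      algebraMap R (reesAlgebra I) y :=
    Subtype.ext (by simp)
  refine Ideal.Quotient.eq_zero_iff_mem.mpr ?_
  rw [hC]
  exact Ideal.mem_map_of_mem _ hy

lemma gradedClass_eq_zero_of_mem_pow_succ {k : ℕ} {r : R} (hr : r ∈ I ^ k)
    (hr' : r ∈ I ^ (k + 1)) : gradedClass I k r hr = 0 := by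
  rw [pow_succ] at hr'
  induction hr' using Submodule.mul_induction_on' with
  | mem_mul_mem x hx y hy =>
    have hy₀ : y ∈ I ^ 0 := by simp
    rw [show gradedClass I k (x * y) hr = gradedClass I k x hx * gradedClass I 0 y hy₀ from
      (gradedClass_mul I hx hy₀ hr).symm, gradedClass_zero_eq_zero_of_mem I hy, mul_zero]
  | add x hx y hy ihx ihy =>
    rw [gradedClass_add I (Ideal.mul_le_left hx) (Ideal.mul_le_left hy), ihx, ihy, add_zero]

lemma gradedClass_eq_zero_iff {k : ℕ} {r : R} (hr : r ∈ I ^ k) :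
    gradedClass I k r hr = 0 ↔ r ∈ I ^ (k + 1) := by
  refine ⟨fun h => ?_, gradedClass_eq_zero_of_mem_pow_succ I hr⟩
  simpa using coeff_mem_pow_succ_of_mem_map_algebraMap I (Ideal.Quotient.eq_zero_iff_mem.mp h) k

end GradedClass

section NonZeroDivisorInitialForm

variable {R : Type*} [CommRing R] {I : Ideal R} {m : ℕ} {a : R} (ha : a ∈ I ^ m)
  (hreg : gradedClass I m a ha ∈ nonZeroDivisors (assocGraded I))
include hreg

lemma mem_pow_succ_of_mul_mem_pow_succ {k : ℕ} {r : R} (hr : r ∈ I ^ k)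
    (har : a * r ∈ I ^ (m + k + 1)) : r ∈ I ^ (k + 1) := by
  have har' : a * r ∈ I ^ (m + k) := Ideal.pow_le_pow_right (Nat.le_succ _) har
  rw [← gradedClass_eq_zero_iff I hr, ← mul_left_mem_nonZeroDivisors_eq_zero_iff hreg,
    gradedClass_mul I ha hr har', gradedClass_eq_zero_iff]
  exact har

lemma mem_pow_of_mul_mem_pow {j : ℕ} {r : R} (har : a * r ∈ I ^ (m + j)) : r ∈ I ^ j := by
  induction j with
  | zero => simp
  | succ j ih =>
    exact mem_pow_succ_of_mul_mem_pow_succ ha hreg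
      (ih (Ideal.pow_le_pow_right (by omega) har)) har

lemma span_singleton_inf_pow (n : ℕ) :
    Ideal.span {a} ⊓ I ^ n = Ideal.span {a} * I ^ (n - m) := by
  refine le_antisymm ?_ (le_inf Ideal.mul_le_left ?_)
  · rintro x ⟨hxa, hxn⟩
    obtain ⟨r, rfl⟩ := Ideal.mem_span_singleton'.mp hxa
    rw [mul_comm r a] at hxn ⊢
    have hr : r ∈ I ^ (n - m) := by
      rcases le_total n m with hnm | hmn
      · simp [Nat.sub_eq_zero_of_le hnm]
      · exact mem_pow_of_mul_mem_pow ha hreg (by rwa [Nat.add_sub_cancel' hmn])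
    exact Ideal.mem_span_singleton_mul.mpr ⟨r, hr, rfl⟩
  · calc Ideal.span {a} * I ^ (n - m) ≤ I ^ m * I ^ (n - m) :=
          Ideal.mul_mono_left ((Ideal.span_singleton_le_iff_mem _).mpr ha)
      _ = I ^ (m + (n - m)) := (pow_add I m (n - m)).symm
      _ ≤ I ^ n := Ideal.pow_le_pow_right (by omega)

end NonZeroDivisorInitialForm

/-- if `a ∈ I \ mI` has initial form `a°` a nonzerodivisor in `G(I)`, then
`aR ∩ Iⁿ = aI^{n-1}` for all `n ≥ 0` (with `I^{-1} = R`, i.e. with truncated subtraction),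
and consequently `mIⁿ + aI^{n-1} = mIⁿ + (aR ∩ Iⁿ)`. -/
theorem stmt3 {R : Type*} [CommRing R] [IsLocalRing R]
    (I : Ideal R) (a : R) (haI : a ∈ I)
    (hcirc : gradedClass I 1 a (by simpa using haI) ∈ nonZeroDivisors (assocGraded I)) :
    ∀ n : ℕ,
      Ideal.span {a} ⊓ I ^ n = Ideal.span {a} * I ^ (n - 1) ∧
      maximalIdeal R * I ^ n + Ideal.span {a} * I ^ (n - 1) =
        maximalIdeal R * I ^ n + (Ideal.span {a} ⊓ I ^ n) := by
  intro n
  have hinter := span_singleton_inf_pow _ hcirc n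
  exact ⟨hinter, by rw [hinter]⟩
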